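/- For |q|<1, |p|<1, |x|<1, |y|<1 and q^a ≠ 1, q^d ≠ 1, the bibasic Humbert function Ψ₁ satisfies the contiguous relation: Ψ₁(q^{a+1},p^b;p^c,q^d;q,p,x,y) = Ψ₁(q^a,p^b;p^c,q^d;q,p,x,y) + (q^a x/(1-q^d))·Ψ₁(q^{a+1},p^b;p^c,q^{d+1};q,p,x,y) + (q^a/(1-q^a))·Ψ₁(q^a,p^b;p^c,q^d;q,p,qx,y) − (q^a/(1-q^a))·Ψ₁(q^a,p^b;p^c,q^d;q,p,qx,qy). -/

import Mathlib

open scoped BigOperators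
open Filter

/-- q-shifted factorial `(z;q)_k`. -/
noncomputable def qPoch (q z : ℂ) (k : ℕ) : ℂ :=
  ∏ r ∈ Finset.range k, (1 - z * q ^ r)

/-- infinite q-shifted factorial `(z;q)_∞`. -/
noncomputable def qPochInf (q z : ℂ) : ℂ := ∏' r : ℕ, (1 - z * q ^ r)

/-- bibasic Humbert function `Ψ₁(A,B;C,D;q,p,x,y)` with `A=qᵃ, B=pᵇ, C=pᶜ, D=q^d`. -/
noncomputable def Psi1 (q p A B C D x y : ℂ) : ℂ :=
  ∑' kl : ℕ × ℕ,
    qPoch q A (kl.1 + kl.2) * qPoch p B kl.2 /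
      (qPoch p C kl.2 * qPoch q D kl.1 * qPoch q q kl.1 * qPoch p p kl.2) *
      x ^ kl.1 * y ^ kl.2

/-- bibasic Humbert function `Ψ₂(A;B,C;q,p,x,y)` with `A=qᵃ, B=pᵇ, C=qᶜ`. -/
noncomputable def Psi2 (q p A B C x y : ℂ) : ℂ :=
  ∑' kl : ℕ × ℕ,
    qPoch q A (kl.1 + kl.2) /
      (qPoch p B kl.2 * qPoch q C kl.1 * qPoch q q kl.1 * qPoch p p kl.2) *
      x ^ kl.1 * y ^ kl.2

/-- the q-difference operator `D_{x,q}`. -/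
noncomputable def qDiff (q : ℂ) (f : ℂ → ℂ) : ℂ → ℂ :=
  fun x => (f x - f (q * x)) / ((1 - q) * x)

/-- basic hypergeometric series `₂φ₁(A,B;C;q,x)`. -/
noncomputable def phi21 (q A B C x : ℂ) : ℂ :=
  ∑' k : ℕ, qPoch q A k * qPoch q B k / (qPoch q C k * qPoch q q k) * x ^ k

/-- basic confluent hypergeometric series `₁φ₁(A;C;q,z)`. -/
noncomputable def phi11 (q A C z : ℂ) : ℂ :=
  ∑' k : ℕ, qPoch q A k / (qPoch q C k * qPoch q q k) *
    (-1) ^ k * q ^ (k * (k - 1) / 2) * z ^ k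

/-!
Termwise, `(1 - A) (Aq;q)_n = (A;q)_n (1 - A qⁿ)` gives
`(1 - qᵃ) Ψ₁(qᵃ⁺¹; x, y) = Ψ₁(qᵃ; x, y) - qᵃ Ψ₁(qᵃ; qx, qy)`.
In `Ψ₁(qᵃ; x, y) - Ψ₁(qᵃ; qx, y)` the `(k, l)` term acquires the factor `1 - qᵏ`, which cancels
against `(q;q)_k`; after the shift `k ↦ k + 1` this difference is
`(1 - qᵃ) x / (1 - q^d) Ψ₁(qᵃ⁺¹, q^{d+1}; x, y)`. The contiguous relation is a linear combination
of these two identities. All series converge absolutely since `(z;q)_k` and `(z;q)_k⁻¹` are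
bounded in `k`.
-/

open Finset

lemma exists_norm_prod_range_le {R : Type*} [NormedCommRing R] [NormOneClass R] {g : ℕ → R}
    (hg : Summable fun r => ‖g r - 1‖) : ∃ C, ∀ k, ‖∏ r ∈ range k, g r‖ ≤ C := by
  refine ⟨Real.exp (∑' r, ‖g r - 1‖), fun k => ?_⟩
  calc ‖∏ r ∈ range k, g r‖ ≤ ∏ r ∈ range k, ‖g r‖ := norm_prod_le _ _
    _ ≤ ∏ r ∈ range k, Real.exp ‖g r - 1‖ := by
      refine prod_le_prod (fun _ _ => norm_nonneg _) fun r _ => ?_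
      calc ‖g r‖ ≤ ‖g r - 1‖ + ‖(1 : R)‖ := norm_le_norm_sub_add _ _
        _ ≤ Real.exp ‖g r - 1‖ := by rw [norm_one]; exact Real.add_one_le_exp _
    _ = Real.exp (∑ r ∈ range k, ‖g r - 1‖) := (Real.exp_sum _ _).symm
    _ ≤ Real.exp (∑' r, ‖g r - 1‖) :=
      Real.exp_le_exp.2 (hg.sum_le_tsum _ fun _ _ => norm_nonneg _)

section QPoch

variable {q : ℂ}

lemma qPoch_succ (q z : ℂ) (k : ℕ) : qPoch q z (k + 1) = qPoch q z k * (1 - z * q ^ k) :=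
  prod_range_succ _ _

lemma qPoch_succ' (q z : ℂ) (k : ℕ) : qPoch q z (k + 1) = (1 - z) * qPoch q (z * q) k := by
  simp only [qPoch, prod_range_succ', pow_zero, mul_one, pow_succ', mul_assoc, mul_left_comm,
    mul_comm]

lemma one_sub_mul_qPoch_mul (q z : ℂ) (k : ℕ) :
    (1 - z) * qPoch q (z * q) k = qPoch q z k * (1 - z * q ^ k) := by
  rw [← qPoch_succ, qPoch_succ']

lemma exists_norm_qPoch_le (hq : ‖q‖ < 1) (z : ℂ) : ∃ C, ∀ k, ‖qPoch q z k‖ ≤ C := by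
  refine exists_norm_prod_range_le ?_
  simpa [norm_mul, norm_pow] using
    (summable_geometric_of_lt_one (norm_nonneg q) hq).mul_left ‖z‖

lemma exists_norm_inv_qPoch_le (hq : ‖q‖ < 1) (z : ℂ) :
    ∃ C, ∀ k, ‖(qPoch q z k)⁻¹‖ ≤ C := by
  simp only [qPoch, ← prod_inv_distrib]
  refine exists_norm_prod_range_le ?_
  have hzq : Filter.Tendsto (fun r : ℕ => -(z * q ^ r)) Filter.atTop (nhds 0) := by
    simpa using ((tendsto_pow_atTop_nhds_zero_of_norm_lt_one hq).const_mul z).neg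
  have hO := (NormedRing.inverse_add_norm_diff_first_order (1 : ℂˣ)).comp_tendsto hzq
  simp only [Units.val_one, inv_one, Ring.inverse_eq_inv', ← sub_eq_add_neg, norm_neg,
    Function.comp_def] at hO
  refine summable_of_isBigO_nat ?_ (Asymptotics.isBigO_norm_left.2 hO)
  simpa [norm_mul, norm_pow] using
    (summable_geometric_of_lt_one (norm_nonneg q) hq).mul_left ‖z‖

end QPoch

lemma tsum_prod_eq_tsum_succ_fst {M : Type*} [AddCommMonoid M] [TopologicalSpace M]
    {f : ℕ × ℕ → M} (hf : ∀ l, f (0, l) = 0) :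
    ∑' kl, f kl = ∑' kl : ℕ × ℕ, f (kl.1 + 1, kl.2) := by
  refine (Function.Injective.tsum_eq (fun a b h => ?_) ?_).symm
  · simp only [Prod.mk.injEq, Nat.add_right_cancel_iff] at h
    exact Prod.ext h.1 h.2
  · rintro ⟨_ | k, l⟩ hkl
    · exact absurd (hf l) hkl
    · exact ⟨(k, l), rfl⟩

noncomputable def psi1Term (q p A B C D x y : ℂ) (kl : ℕ × ℕ) : ℂ :=
  qPoch q A (kl.1 + kl.2) * qPoch p B kl.2 /
    (qPoch p C kl.2 * qPoch q D kl.1 * qPoch q q kl.1 * qPoch p p kl.2) *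
    x ^ kl.1 * y ^ kl.2

lemma Psi1_eq_tsum (q p A B C D x y : ℂ) :
    Psi1 q p A B C D x y = ∑' kl, psi1Term q p A B C D x y kl := rfl

lemma norm_mul_lt_one {s t : ℂ} (hs : ‖s‖ < 1) (ht : ‖t‖ < 1) : ‖s * t‖ < 1 := by
  rw [norm_mul]
  exact mul_lt_one_of_nonneg_of_lt_one_left (norm_nonneg s) hs ht.le

section Psi1

variable {q p : ℂ} (A B C D : ℂ) {x y : ℂ}

lemma summable_psi1Term (hq : ‖q‖ < 1) (hp : ‖p‖ < 1) (hx : ‖x‖ < 1) (hy : ‖y‖ < 1) :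
    Summable (psi1Term q p A B C D x y) := by
  obtain ⟨cA, hA⟩ := exists_norm_qPoch_le hq A
  obtain ⟨cB, hB⟩ := exists_norm_qPoch_le hp B
  obtain ⟨cC, hC⟩ := exists_norm_inv_qPoch_le hp C
  obtain ⟨cD, hD⟩ := exists_norm_inv_qPoch_le hq D
  obtain ⟨cQ, hQ⟩ := exists_norm_inv_qPoch_le hq q
  obtain ⟨cP, hP⟩ := exists_norm_inv_qPoch_le hp p
  have hxy : Summable fun kl : ℕ × ℕ => ‖x‖ ^ kl.1 * ‖y‖ ^ kl.2 :=
    (summable_geometric_of_lt_one (norm_nonneg x) hx).mul_of_nonneg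
      (summable_geometric_of_lt_one (norm_nonneg y) hy)
      (fun _ => by positivity) fun _ => by positivity
  refine .of_norm_bounded (hxy.mul_left (cA * cB * cC * cD * cQ * cP)) fun ⟨k, l⟩ => ?_
  calc ‖psi1Term q p A B C D x y (k, l)‖
      = ‖qPoch q A (k + l)‖ * ‖qPoch p B l‖ * ‖(qPoch p C l)⁻¹‖ * ‖(qPoch q D k)⁻¹‖ *
          ‖(qPoch q q k)⁻¹‖ * ‖(qPoch p p l)⁻¹‖ * (‖x‖ ^ k * ‖y‖ ^ l) := by
        simp only [psi1Term, div_eq_mul_inv, mul_inv, norm_mul, norm_pow]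
        ring
    _ ≤ cA * cB * cC * cD * cQ * cP * (‖x‖ ^ k * ‖y‖ ^ l) := by
        have hcA := (norm_nonneg _).trans (hA 0)
        have hcB := (norm_nonneg _).trans (hB 0)
        have hcC := (norm_nonneg _).trans (hC 0)
        have hcD := (norm_nonneg _).trans (hD 0)
        have hcQ := (norm_nonneg _).trans (hQ 0)
        gcongr
        exacts [hA _, hB _, hC _, hD _, hQ _, hP _]

lemma psi1Term_mul_mul (s t : ℂ) (k l : ℕ) :
    psi1Term q p A B C D (s * x) (t * y) (k, l) =
      s ^ k * t ^ l * psi1Term q p A B C D x y (k, l) := by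
  simp only [psi1Term, mul_pow]
  ring

lemma one_sub_mul_psi1Term_mul (k l : ℕ) :
    (1 - A) * psi1Term q p (A * q) B C D x y (k, l) =
      psi1Term q p A B C D x y (k, l) - A * psi1Term q p A B C D (q * x) (q * y) (k, l) := by
  rw [psi1Term_mul_mul]
  simp only [psi1Term]
  linear_combination qPoch p B l / (qPoch p C l * qPoch q D k * qPoch q q k * qPoch p p l) *
    x ^ k * y ^ l * one_sub_mul_qPoch_mul q A (k + l)

lemma one_sub_pow_mul_psi1Term_succ_fst {k : ℕ} (hk : q ^ (k + 1) ≠ 1) (l : ℕ) :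
    (1 - q ^ (k + 1)) * psi1Term q p A B C D x y (k + 1, l) =
      (1 - A) * x / (1 - D) * psi1Term q p (A * q) B C (D * q) x y (k, l) := by
  simp only [psi1Term]
  rw [Nat.add_right_comm, qPoch_succ' q A, qPoch_succ' q D, qPoch_succ q q, ← pow_succ']
  simp only [div_eq_mul_inv, mul_inv]
  linear_combination (1 - A) * qPoch q (A * q) (k + l) * qPoch p B l * (qPoch p C l)⁻¹ *
    (1 - D)⁻¹ * (qPoch q (D * q) k)⁻¹ * (qPoch q q k)⁻¹ * (qPoch p p l)⁻¹ * x ^ (k + 1) * y ^ l *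
    mul_inv_cancel₀ (sub_ne_zero.2 hk.symm)

theorem one_sub_mul_Psi1_mul (hq : ‖q‖ < 1) (hp : ‖p‖ < 1) (hx : ‖x‖ < 1) (hy : ‖y‖ < 1) :
    (1 - A) * Psi1 q p (A * q) B C D x y =
      Psi1 q p A B C D x y - A * Psi1 q p A B C D (q * x) (q * y) := by
  have hqx := norm_mul_lt_one hq hx
  have hqy := norm_mul_lt_one hq hy
  simp only [Psi1_eq_tsum]
  rw [← tsum_mul_left, ← tsum_mul_left, ← Summable.tsum_sub
    (summable_psi1Term A B C D hq hp hx hy) ((summable_psi1Term A B C D hq hp hqx hqy).mul_left A)]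
  exact tsum_congr fun ⟨k, l⟩ => one_sub_mul_psi1Term_mul A B C D k l

theorem Psi1_sub_Psi1_mul_fst (hq : ‖q‖ < 1) (hp : ‖p‖ < 1) (hx : ‖x‖ < 1) (hy : ‖y‖ < 1) :
    Psi1 q p A B C D x y - Psi1 q p A B C D (q * x) y =
      (1 - A) * x / (1 - D) * Psi1 q p (A * q) B C (D * q) x y := by
  have hqx := norm_mul_lt_one hq hx
  have hshift (k l : ℕ) :
      psi1Term q p A B C D (q * x) y (k, l) = q ^ k * psi1Term q p A B C D x y (k, l) := by
    simpa using psi1Term_mul_mul A B C D (x := x) (y := y) q 1 k l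
  simp only [Psi1_eq_tsum]
  rw [← Summable.tsum_sub (summable_psi1Term A B C D hq hp hx hy)
    (summable_psi1Term A B C D hq hp hqx hy), tsum_prod_eq_tsum_succ_fst, ← tsum_mul_left]
  · refine tsum_congr fun ⟨k, l⟩ => ?_
    have hk : q ^ (k + 1) ≠ 1 := fun h => by
      simpa [← norm_pow, h] using pow_lt_one₀ (norm_nonneg q) hq k.succ_ne_zero
    rw [hshift, ← one_sub_pow_mul_psi1Term_succ_fst A B C D hk]
    ring
  · intro l
    rw [hshift, pow_zero, one_mul, sub_self]

end Psi1

theorem stmt0_general (q p a b c d x y : ℂ)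
    (hq0 : 0 < ‖q‖) (hq1 : ‖q‖ < 1)
    (hp1 : ‖p‖ < 1)
    (hx : ‖x‖ < 1) (hy : ‖y‖ < 1)
    (ha : q ^ a ≠ 1) :
    Psi1 q p (q ^ (a + 1)) (p ^ b) (p ^ c) (q ^ d) x y =
      Psi1 q p (q ^ a) (p ^ b) (p ^ c) (q ^ d) x y +
        q ^ a * x / (1 - q ^ d) *
          Psi1 q p (q ^ (a + 1)) (p ^ b) (p ^ c) (q ^ (d + 1)) x y +
        q ^ a / (1 - q ^ a) *
          Psi1 q p (q ^ a) (p ^ b) (p ^ c) (q ^ d) (q * x) y -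
        q ^ a / (1 - q ^ a) *
          Psi1 q p (q ^ a) (p ^ b) (p ^ c) (q ^ d) (q * x) (q * y) := by
  have hq : q ≠ 0 := norm_pos_iff.1 hq0
  have ha' : 1 - q ^ a ≠ 0 := sub_ne_zero.2 ha.symm
  simp only [Complex.cpow_add _ _ hq, Complex.cpow_one]
  have h1 := one_sub_mul_Psi1_mul (q ^ a) (p ^ b) (p ^ c) (q ^ d) hq1 hp1 hx hy
  have h2 := Psi1_sub_Psi1_mul_fst (q ^ a) (p ^ b) (p ^ c) (q ^ d) hq1 hp1 hx hy
  have hcoef : q ^ a * x / (1 - q ^ d) =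
      q ^ a / (1 - q ^ a) * ((1 - q ^ a) * x / (1 - q ^ d)) := by
    field_simp
  rw [mul_comm] at h1
  rw [hcoef, mul_assoc, ← h2, eq_div_of_mul_eq ha' h1]
  field_simp
  ring

theorem stmt0 (q p a b c d x y : ℂ)
    (hq0 : 0 < ‖q‖) (hq1 : ‖q‖ < 1)
    (hp0 : 0 < ‖p‖) (hp1 : ‖p‖ < 1)
    (hx : ‖x‖ < 1) (hy : ‖y‖ < 1)
    (ha : q ^ a ≠ 1) (hd : q ^ d ≠ 1) :
    Psi1 q p (q ^ (a + 1)) (p ^ b) (p ^ c) (q ^ d) x y =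
      Psi1 q p (q ^ a) (p ^ b) (p ^ c) (q ^ d) x y +
        q ^ a * x / (1 - q ^ d) *
          Psi1 q p (q ^ (a + 1)) (p ^ b) (p ^ c) (q ^ (d + 1)) x y +
        q ^ a / (1 - q ^ a) *
          Psi1 q p (q ^ a) (p ^ b) (p ^ c) (q ^ d) (q * x) y -
        q ^ a / (1 - q ^ a) *
          Psi1 q p (q ^ a) (p ^ b) (p ^ c) (q ^ d) (q * x) (q * y) :=
  stmt0_general q p a b c d x y hq0 hq1 hp1 hx hy ha
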